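/- Let S ∈ ℝ^{n×m} be nonzero with ν = min(n,m) ≥ 2, singular value decomposition S = U·Diag(σ₁,…,σ_ν)·Vᵀ (U, V orthogonal, u₁, v₁ the first columns), and suppose σ₁ = α·σ₂ with α > 1. Let λ > 0 satisfy 1/κ(S) ≤ 1 − λ/(1 + λ/ν) ≤ 1/α and let S' = S − λ·(σ₁·u₁v₁ᵀ − (1/ν)·S). Then κ(S') = κ(S)/α, i.e. κ(S') = σ₂/σ_min>0(S). -/

import Mathlib

/-!
Write `S = U·Diag(σ)·Vᵀ`, `t = λ/ν` and `c = 1 − λ/(1 + t)`. Then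
`S' = (1 + t)·S − λσ₁·u₁v₁ᵀ = U·Diag((1 + t)·σ')·Vᵀ`, where `σ'` is `σ` with `σ₁` replaced by
`cσ₁`. Since `U` and `V` are orthogonal, the singular values of `U·Diag(d)·Vᵀ` with `d ≥ 0` are
the entries of `d` up to order, so `κ(S')` is the ratio of the largest to the smallest positive
entry of `(1 + t)·σ'`, that is, of `σ'`. The hypotheses on `λ` say exactly
`σ_min>0(S) ≤ cσ₁ ≤ σ₂`, so that largest entry is `σ₂` and that smallest positive entry is still
`σ_min>0(S)`.
-/

open Matrix

/-- The Gram matrix `Sᵀ * S` of a real matrix is Hermitian (symmetric). -/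
theorem gram_isHermitian {n m : ℕ} (S : Matrix (Fin n) (Fin m) ℝ) :
    (Sᵀ * S).IsHermitian := by
  simpa [Matrix.conjTranspose_eq_transpose_of_trivial] using
    Matrix.isHermitian_conjTranspose_mul_self S

/-- The singular values of a real `n × m` matrix `S`, in nonincreasing order:
the nonnegative square roots of the `min n m` largest eigenvalues of `Sᵀ * S`. -/
noncomputable def svals {n m : ℕ} (S : Matrix (Fin n) (Fin m) ℝ) :
    Fin (min n m) → ℝ := fun i =>
  Real.sqrt (((gram_isHermitian S).eigenvalues ∘
    Tuple.sort (gram_isHermitian S).eigenvalues)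
      ⟨m - 1 - i, by have := i.isLt; omega⟩)

/-- The operator norm of a matrix induced by the Euclidean norms. -/
noncomputable def opNorm {n m : ℕ} (S : Matrix (Fin n) (Fin m) ℝ) : ℝ :=
  ‖LinearMap.toContinuousLinearMap (Matrix.toEuclideanLin S)‖

/-- The Frobenius norm of a matrix. -/
noncomputable def frobNorm {n m : ℕ} (S : Matrix (Fin n) (Fin m) ℝ) : ℝ :=
  Real.sqrt (∑ i, ∑ j, (S i j) ^ 2)

/-- The regularizer `r(S) = (1/2)‖S‖₂² − (1/(2ν))‖S‖_F²` with `ν = min n m`. -/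
noncomputable def reg {n m : ℕ} (S : Matrix (Fin n) (Fin m) ℝ) : ℝ :=
  (1 / 2) * opNorm S ^ 2 - (1 / (2 * (min n m : ℝ))) * frobNorm S ^ 2

/-- The largest singular value of `S`. -/
noncomputable def sigmaMax {n m : ℕ} (S : Matrix (Fin n) (Fin m) ℝ) : ℝ :=
  ⨆ i, svals S i

/-- The smallest nonzero singular value of `S`. -/
noncomputable def sigmaMinPos {n m : ℕ} (S : Matrix (Fin n) (Fin m) ℝ) : ℝ :=
  sInf {x | (∃ i, svals S i = x) ∧ 0 < x}

/-- The condition number `κ(S) = σ_max(S) / σ_min>0(S)`. -/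
noncomputable def kappa {n m : ℕ} (S : Matrix (Fin n) (Fin m) ℝ) : ℝ :=
  sigmaMax S / sigmaMinPos S

/-- The rectangular diagonal `n × m` matrix with diagonal entries `d`. -/
noncomputable def diagRect {n m : ℕ} (d : Fin (min n m) → ℝ) :
    Matrix (Fin n) (Fin m) ℝ := Matrix.of fun i j =>
  if h : (i : ℕ) = (j : ℕ) then
    d ⟨i, by have := i.isLt; have := j.isLt; omega⟩ else 0

theorem Multiset.map_univ_val_comp_equiv {ι κ α : Type*} [Fintype ι] [Fintype κ]
    (g : κ → α) (e : ι ≃ κ) :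
    Multiset.map (g ∘ e) Finset.univ.val = Multiset.map g Finset.univ.val := by
  rw [← Multiset.map_map, Multiset.map_univ_val_equiv]

theorem eq_of_antitone_of_map_univ_eq {α : Type*} [PartialOrder α] {m : ℕ} {f g : Fin m → α}
    (hf : Antitone f) (hg : Antitone g)
    (h : Multiset.map f Finset.univ.val = Multiset.map g Finset.univ.val) : f = g := by
  refine List.ofFn_injective (List.Perm.eq_of_sortedGE hf.sortedGE_ofFn hg.sortedGE_ofFn ?_)
  rwa [← Multiset.coe_eq_coe, ← Fin.univ_val_map, ← Fin.univ_val_map]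

open Polynomial in
theorem Matrix.IsHermitian.map_eigenvalues_univ_eq {ι : Type*} [Fintype ι] [DecidableEq ι]
    {A Q : Matrix ι ι ℝ} (hA : A.IsHermitian) (hQ : Qᵀ * Q = 1) {μ : ι → ℝ}
    (h : A = Q * diagonal μ * Qᵀ) :
    Multiset.map hA.eigenvalues Finset.univ.val = Multiset.map μ Finset.univ.val := by
  have hchar : A.charpoly = (diagonal μ).charpoly := by
    rw [h, Matrix.mul_assoc, charpoly_mul_comm, Matrix.mul_assoc, hQ, Matrix.mul_one]
  have hroots := hA.roots_charpoly_eq_eigenvalues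
  rw [hchar, charpoly_diagonal,
    roots_prod _ _ (by simp [Finset.prod_ne_zero_iff, X_sub_C_ne_zero])] at hroots
  simpa using hroots.symm

def padZero {α : Type*} [Zero α] {k m : ℕ} (e : Fin k → α) : Fin m → α :=
  fun j => if h : (j : ℕ) < k then e ⟨j, h⟩ else 0

theorem map_padZero_univ {α : Type*} [Zero α] {k m : ℕ} (hkm : k ≤ m) (e : Fin k → α) :
    Multiset.map (padZero e : Fin m → α) Finset.univ.val
      = Multiset.map e Finset.univ.val + Multiset.replicate (m - k) 0 := by
  obtain ⟨l, rfl⟩ := Nat.exists_eq_add_of_le hkm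
  simp [Fin.univ_val_map, List.ofFn_add, padZero, List.ofFn_const, ← Multiset.coe_add,
    Multiset.coe_replicate]

theorem Antitone.padZero {α : Type*} [Preorder α] [Zero α] {k m : ℕ} {e : Fin k → α}
    (he : Antitone e) (he₀ : ∀ i, 0 ≤ e i) : Antitone (padZero e : Fin m → α) := by
  intro i j hij
  simp only [_root_.padZero]
  split_ifs with hj hi hi
  · exact he (Fin.mk_le_mk.mpr hij)
  · omega
  · exact he₀ _
  · exact le_rfl

theorem Fin.sum_dite_val_eq {M : Type*} [AddCommMonoid M] {n : ℕ} (a : ℕ)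
    (f : (x : Fin n) → (x : ℕ) = a → M) :
    ∑ x : Fin n, (if h : (x : ℕ) = a then f x h else 0)
      = if h : a < n then f ⟨a, h⟩ rfl else 0 := by
  split_ifs with ha
  · rw [Fintype.sum_eq_single ⟨a, ha⟩ fun x hx => dif_neg fun h => hx (Fin.ext h), dif_pos rfl]
  · exact Finset.sum_eq_zero fun x _ => dif_neg (by omega)

/-- `sigmaMinPos S` and `kappa S` are by definition `minPos (svals S)` and `condNum (svals S)`. -/
noncomputable def minPos {ι : Type*} (d : ι → ℝ) : ℝ :=
  sInf {x | (∃ i, d i = x) ∧ 0 < x}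

noncomputable def condNum {ι : Type*} (d : ι → ℝ) : ℝ :=
  (⨆ i, d i) / minPos d

section condNum

open scoped Pointwise

variable {ι : Type*}

theorem minPos_nonneg (d : ι → ℝ) : 0 ≤ minPos d :=
  Real.sInf_nonneg fun _ hx => hx.2.le

theorem minPos_le {d : ι → ℝ} {i : ι} (hi : 0 < d i) : minPos d ≤ d i :=
  csInf_le ⟨0, fun _ hx => hx.2.le⟩ ⟨⟨i, rfl⟩, hi⟩

theorem minPos_smul {c : ℝ} (hc : 0 < c) (d : ι → ℝ) : minPos (c • d) = c * minPos d := by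
  have hset : {x | (∃ i, (c • d) i = x) ∧ 0 < x} = c • {x | (∃ i, d i = x) ∧ 0 < x} := by
    ext x
    simp only [Set.mem_smul_set, Set.mem_ofPred_eq, Pi.smul_apply, smul_eq_mul]
    constructor
    · rintro ⟨⟨i, rfl⟩, hx⟩
      exact ⟨d i, ⟨⟨i, rfl⟩, pos_of_mul_pos_right hx hc.le⟩, rfl⟩
    · rintro ⟨_, ⟨⟨i, rfl⟩, hy⟩, rfl⟩
      exact ⟨⟨i, rfl⟩, mul_pos hc hy⟩
  rw [minPos, hset, Real.sInf_smul_of_nonneg hc.le, smul_eq_mul, minPos]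

theorem condNum_smul {c : ℝ} (hc : 0 < c) (d : ι → ℝ) : condNum (c • d) = condNum d := by
  simp only [condNum, minPos_smul hc, Pi.smul_apply, smul_eq_mul,
    ← Real.mul_iSup_of_nonneg hc.le, mul_div_mul_left _ _ hc.ne']

theorem condNum_comp_equiv {κ : Type*} (d : κ → ℝ) (e : ι ≃ κ) : condNum (d ∘ e) = condNum d := by
  simp only [condNum, minPos, iSup, ← Set.mem_range, EquivLike.range_comp]

theorem ciSup_eq_of_forall_le {α : Type*} [ConditionallyCompleteLattice α] {f : ι → α} {i₀ : ι}
    (h : ∀ i, f i ≤ f i₀) : ⨆ i, f i = f i₀ :=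
  have : Nonempty ι := ⟨i₀⟩
  IsLUB.ciSup_eq (IsGreatest.isLUB ⟨⟨i₀, rfl⟩, Set.forall_mem_range.2 h⟩)

theorem iSup_update_eq [DecidableEq ι] {d : ι → ℝ} {i₀ i₁ : ι} {x : ℝ} (h₁₀ : i₁ ≠ i₀)
    (hd : ∀ i ≠ i₀, d i ≤ d i₁) (hx : x ≤ d i₁) : ⨆ i, Function.update d i₀ x i = d i₁ := by
  have hle : ∀ i, Function.update d i₀ x i ≤ Function.update d i₀ x i₁ := by
    intro i
    rw [Function.update_of_ne h₁₀]
    rcases eq_or_ne i i₀ with rfl | hi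
    · simpa using hx
    · simpa [Function.update_of_ne hi] using hd i hi
  rw [ciSup_eq_of_forall_le hle, Function.update_of_ne h₁₀]

variable [Finite ι]

theorem exists_eq_minPos {d : ι → ℝ} {i : ι} (hi : 0 < d i) :
    ∃ k, d k = minPos d ∧ 0 < d k := by
  have hfin : {x | (∃ i, d i = x) ∧ 0 < x}.Finite :=
    (Set.finite_range d).subset fun _ hx => hx.1
  have hne : {x | (∃ i, d i = x) ∧ 0 < x}.Nonempty := ⟨d i, ⟨i, rfl⟩, hi⟩
  obtain ⟨⟨k, hk⟩, hpos⟩ := hne.csInf_mem hfin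
  exact ⟨k, hk, hk ▸ hpos⟩

theorem minPos_update_eq [DecidableEq ι] {d : ι → ℝ} {i₀ : ι} {x : ℝ} (hpos : 0 < d i₀)
    (hx₁ : minPos d ≤ x) (hx₂ : x ≤ d i₀) : minPos (Function.update d i₀ x) = minPos d := by
  obtain ⟨k, hk, hkpos⟩ := exists_eq_minPos hpos
  rcases eq_or_ne k i₀ with rfl | hk₀
  · rw [le_antisymm hx₂ (hk ▸ hx₁), Function.update_eq_self]
  refine IsLeast.csInf_eq ⟨⟨⟨k, by rw [Function.update_of_ne hk₀, hk]⟩, hk ▸ hkpos⟩, ?_⟩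
  rintro _ ⟨⟨i, rfl⟩, hi⟩
  rcases eq_or_ne i i₀ with rfl | hii₀
  · simpa using hx₁
  · rw [Function.update_of_ne hii₀] at hi ⊢
    exact minPos_le hi

theorem condNum_update_eq [DecidableEq ι] {d : ι → ℝ} {i₀ i₁ : ι} {x : ℝ} (h₁₀ : i₁ ≠ i₀)
    (hd : ∀ i ≠ i₀, d i ≤ d i₁) (hd₁₀ : d i₁ ≤ d i₀) (hpos : 0 < d i₀)
    (hx₁ : minPos d ≤ x) (hx₂ : x ≤ d i₁) :
    condNum (Function.update d i₀ x) = d i₁ / minPos d := by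
  rw [condNum, iSup_update_eq h₁₀ hd hx₂, minPos_update_eq hpos hx₁ (hx₂.trans hd₁₀)]

end condNum

section diagRect

variable {n m : ℕ}

theorem diagRect_zero : diagRect (0 : Fin (min n m) → ℝ) = (0 : Matrix (Fin n) (Fin m) ℝ) := by
  ext i j; simp [diagRect]

theorem diagRect_add (d e : Fin (min n m) → ℝ) :
    diagRect (d + e) = (diagRect d + diagRect e : Matrix (Fin n) (Fin m) ℝ) := by
  ext i j; simp only [diagRect, of_apply, Matrix.add_apply, Pi.add_apply]; split_ifs <;> simp

theorem diagRect_smul (c : ℝ) (d : Fin (min n m) → ℝ) :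
    diagRect (c • d) = (c • diagRect d : Matrix (Fin n) (Fin m) ℝ) := by
  ext i j; simp only [diagRect, of_apply, Matrix.smul_apply, Pi.smul_apply]; split_ifs <;> simp

theorem diagRect_transpose_mul_self (d : Fin (min n m) → ℝ) :
    (diagRect d)ᵀ * diagRect d = diagonal (padZero (d ^ 2)) := by
  ext j k
  simp only [mul_apply, transpose_apply, diagRect, of_apply, diagonal_apply, padZero, dite_mul,
    zero_mul, mul_dite, mul_zero]
  rw [Fin.sum_dite_val_eq]
  rcases eq_or_ne j k with rfl | hjk
  · simp [sq]
  · simp [hjk, Fin.val_ne_of_ne hjk.symm]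

theorem diagRect_single (k : Fin (min n m)) (c : ℝ) :
    diagRect (Pi.single k c)
      = single (k.castLE (min_le_left n m)) (k.castLE (min_le_right n m)) c := by
  ext i j
  simp only [diagRect, of_apply, single_apply, Pi.single_apply, Fin.ext_iff, Fin.val_castLE]
  split_ifs <;> grind

theorem mul_diagRect_single_mul (U : Matrix (Fin n) (Fin n) ℝ) (V : Matrix (Fin m) (Fin m) ℝ)
    (k : Fin (min n m)) :
    U * diagRect (Pi.single k 1) * Vᵀ
      = of fun i j => U i (k.castLE (min_le_left n m)) * V j (k.castLE (min_le_right n m)) := by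
  ext i j
  simp [diagRect_single, mul_apply, single_apply, ite_and, Finset.sum_ite_eq, ite_mul]

end diagRect

noncomputable def gramEigenvaluesDesc {n m : ℕ} (S : Matrix (Fin n) (Fin m) ℝ) : Fin m → ℝ :=
  (gram_isHermitian S).eigenvalues ∘ Tuple.sort (gram_isHermitian S).eigenvalues ∘ Fin.rev

section svals

variable {n m : ℕ}

theorem gramEigenvaluesDesc_antitone (S : Matrix (Fin n) (Fin m) ℝ) :
    Antitone (gramEigenvaluesDesc S) :=
  (Tuple.monotone_sort (gram_isHermitian S).eigenvalues).comp_antitone Fin.rev_anti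

theorem map_gramEigenvaluesDesc_univ (S : Matrix (Fin n) (Fin m) ℝ) :
    Multiset.map (gramEigenvaluesDesc S) Finset.univ.val
      = Multiset.map (gram_isHermitian S).eigenvalues Finset.univ.val :=
  (Multiset.map_univ_val_comp_equiv _ (Fin.revPerm (n := m))).trans
    (Multiset.map_univ_val_comp_equiv (gram_isHermitian S).eigenvalues (Tuple.sort _))

theorem svals_eq_sqrt_gramEigenvaluesDesc (S : Matrix (Fin n) (Fin m) ℝ) (i : Fin (min n m)) :
    svals S i = √(gramEigenvaluesDesc S (i.castLE (min_le_right n m))) := by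
  simp only [svals, gramEigenvaluesDesc, Function.comp_apply]
  congr 3
  ext
  simp only [Fin.val_rev, Fin.val_castLE]
  omega

theorem svals_nonneg (S : Matrix (Fin n) (Fin m) ℝ) (i : Fin (min n m)) : 0 ≤ svals S i :=
  Real.sqrt_nonneg _

theorem svals_antitone (S : Matrix (Fin n) (Fin m) ℝ) : Antitone (svals S) := by
  intro i j hij
  simp only [svals_eq_sqrt_gramEigenvaluesDesc]
  exact Real.sqrt_le_sqrt (gramEigenvaluesDesc_antitone S hij)

/-- The Gram matrix is `V·Diag(d², 0, …, 0)·Vᵀ`, so its eigenvalues in decreasing order are the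
squares of the entries of `d` in decreasing order, followed by zeros. -/
theorem exists_svals_mul_diagRect_mul_eq_comp_perm {U : Matrix (Fin n) (Fin n) ℝ}
    {V : Matrix (Fin m) (Fin m) ℝ} (hU : Uᵀ * U = 1) (hV : Vᵀ * V = 1)
    {d : Fin (min n m) → ℝ} (hd : 0 ≤ d) :
    ∃ τ : Equiv.Perm (Fin (min n m)), svals (U * diagRect d * Vᵀ) = d ∘ τ := by
  set S := U * diagRect d * Vᵀ
  have hgram : Sᵀ * S = V * diagonal (padZero (d ^ 2)) * Vᵀ := by
    simp only [S, transpose_mul, transpose_transpose, Matrix.mul_assoc]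
    rw [← Matrix.mul_assoc Uᵀ U, hU, Matrix.one_mul, ← Matrix.mul_assoc (diagRect d)ᵀ,
      diagRect_transpose_mul_self]
  set τ := Tuple.sort (OrderDual.toDual ∘ d)
  have hτ : Antitone (d ∘ τ) := monotone_toDual_comp_iff.mp (Tuple.monotone_sort _)
  have hsorted : gramEigenvaluesDesc S = padZero ((d ∘ τ) ^ 2) := by
    refine eq_of_antitone_of_map_univ_eq (gramEigenvaluesDesc_antitone S)
      (Antitone.padZero (fun i j h => pow_le_pow_left₀ (hd _) (hτ h) 2) fun i => sq_nonneg _) ?_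
    rw [map_gramEigenvaluesDesc_univ, (gram_isHermitian S).map_eigenvalues_univ_eq hV hgram,
      map_padZero_univ (min_le_right n m), map_padZero_univ (min_le_right n m)]
    exact congrArg (· + _) (Multiset.map_univ_val_comp_equiv (d ^ 2) τ).symm
  refine ⟨τ, funext fun i => ?_⟩
  rw [svals_eq_sqrt_gramEigenvaluesDesc, hsorted]
  simp [padZero, i.isLt, Real.sqrt_sq (hd (τ i))]

theorem kappa_mul_diagRect_mul {U : Matrix (Fin n) (Fin n) ℝ}
    {V : Matrix (Fin m) (Fin m) ℝ} (hU : Uᵀ * U = 1) (hV : Vᵀ * V = 1)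
    {d : Fin (min n m) → ℝ} (hd : 0 ≤ d) :
    kappa (U * diagRect d * Vᵀ) = condNum d := by
  obtain ⟨τ, hτ⟩ := exists_svals_mul_diagRect_mul_eq_comp_perm hU hV hd
  change condNum (svals _) = _
  rw [hτ, condNum_comp_equiv]

theorem sigmaMax_eq_svals_zero (S : Matrix (Fin n) (Fin m) ℝ) (h : 0 < min n m) :
    sigmaMax S = svals S ⟨0, h⟩ :=
  ciSup_eq_of_forall_le fun i => svals_antitone S (Nat.zero_le i)

theorem svals_zero_pos {S : Matrix (Fin n) (Fin m) ℝ} {U : Matrix (Fin n) (Fin n) ℝ}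
    {V : Matrix (Fin m) (Fin m) ℝ} (hSVD : S = U * diagRect (svals S) * Vᵀ) (hS : S ≠ 0)
    (h : 0 < min n m) : 0 < svals S ⟨0, h⟩ := by
  refine (svals_nonneg S _).lt_of_ne' fun h₀ => hS ?_
  have : svals S = 0 := funext fun i =>
    le_antisymm ((svals_antitone S (Nat.zero_le i)).trans_eq h₀) (svals_nonneg S i)
  rw [hSVD, this, diagRect_zero, Matrix.mul_zero, Matrix.zero_mul]

theorem sub_smul_sub_eq_mul_diagRect_mul {S : Matrix (Fin n) (Fin m) ℝ}
    {U : Matrix (Fin n) (Fin n) ℝ} {V : Matrix (Fin m) (Fin m) ℝ} {σ : Fin (min n m) → ℝ}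
    (hSVD : S = U * diagRect σ * Vᵀ) {lam r : ℝ} (hr : 1 + lam / r ≠ 0)
    (k : Fin (min n m)) (a : Fin n) (b : Fin m) (ha : (a : ℕ) = k) (hb : (b : ℕ) = k) :
    S - lam • (σ k • of (fun i j => U i a * V j b) - r⁻¹ • S)
      = U * diagRect ((1 + lam / r) • Function.update σ k ((1 - lam / (1 + lam / r)) * σ k))
          * Vᵀ := by
  obtain rfl : a = k.castLE (min_le_left n m) := Fin.ext ha
  obtain rfl : b = k.castLE (min_le_right n m) := Fin.ext hb
  have hvec : (1 + lam / r) • Function.update σ k ((1 - lam / (1 + lam / r)) * σ k)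
      = (1 + lam / r) • σ + (-(lam * σ k)) • Pi.single k 1 := by
    funext l
    rcases eq_or_ne l k with rfl | hl
    · simp only [Pi.add_apply, Pi.smul_apply, Function.update_self, Pi.single_eq_same,
        smul_eq_mul]
      field_simp
      ring
    · simp [hl]
  rw [hvec, diagRect_add, diagRect_smul, diagRect_smul, Matrix.mul_add, Matrix.add_mul,
    Matrix.mul_smul, Matrix.smul_mul, Matrix.mul_smul, Matrix.smul_mul, ← hSVD,
    mul_diagRect_single_mul]
  module

end svals

/-- Let `S ∈ ℝ^{n×m}` be nonzero with `ν = min n m ≥ 2`, singular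
value decomposition `S = U·Diag(σ₁,…,σ_ν)·Vᵀ` (`U`, `V` orthogonal, `u₁`, `v₁` the
first columns), and suppose `σ₁ = α·σ₂` with `α > 1`. Let `λ > 0` satisfy
`1/κ(S) ≤ 1 − λ/(1 + λ/ν) ≤ 1/α` and let `S' = S − λ·(σ₁·u₁v₁ᵀ − (1/ν)·S)`. Then
`κ(S') = κ(S)/α`, i.e. `κ(S') = σ₂/σ_min>0(S)`. -/
theorem kappa_descent_case_two {n m : ℕ} (hν : 2 ≤ min n m)
    (S : Matrix (Fin n) (Fin m) ℝ) (hS : S ≠ 0)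
    (U : Matrix (Fin n) (Fin n) ℝ) (V : Matrix (Fin m) (Fin m) ℝ)
    (hU : Uᵀ * U = 1) (hV : Vᵀ * V = 1)
    (hSVD : S = U * diagRect (svals S) * Vᵀ)
    (α : ℝ) (hα : 1 < α)
    (hσ : svals S ⟨0, by omega⟩ = α * svals S ⟨1, by omega⟩)
    (lam : ℝ) (hlam : 0 < lam)
    (hcase₁ : 1 / kappa S ≤ 1 - lam / (1 + lam / (min n m : ℝ)))
    (hcase₂ : 1 - lam / (1 + lam / (min n m : ℝ)) ≤ 1 / α) :
    kappa (S - lam • (svals S ⟨0, by omega⟩ •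
        Matrix.of (fun i j => U i ⟨0, by omega⟩ * V j ⟨0, by omega⟩)
      - ((min n m : ℝ))⁻¹ • S)) = kappa S / α
    ∧ kappa (S - lam • (svals S ⟨0, by omega⟩ •
        Matrix.of (fun i j => U i ⟨0, by omega⟩ * V j ⟨0, by omega⟩)
      - ((min n m : ℝ))⁻¹ • S)) = svals S ⟨1, by omega⟩ / sigmaMinPos S := by
  have hscale : 0 < 1 + lam / (min n m : ℝ) := by positivity
  set i₀ : Fin (min n m) := ⟨0, by omega⟩
  set i₁ : Fin (min n m) := ⟨1, by omega⟩
  rw [sub_smul_sub_eq_mul_diagRect_mul hSVD hscale.ne' i₀ _ _ rfl rfl]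
  set σ := svals S
  set c := 1 - lam / (1 + lam / (min n m : ℝ))
  have hσ₀ : 0 < σ i₀ := svals_zero_pos hSVD hS _
  have hκS : kappa S = σ i₀ / minPos σ := by rw [kappa, sigmaMax_eq_svals_zero]; rfl
  have hlow : minPos σ ≤ c * σ i₀ := by
    rwa [hκS, one_div_div, div_le_iff₀ hσ₀] at hcase₁
  have hup : c * σ i₀ ≤ σ i₁ :=
    calc c * σ i₀ ≤ 1 / α * σ i₀ := by gcongr
      _ = σ i₁ := by rw [hσ]; field_simp
  have hnonneg : 0 ≤ Function.update σ i₀ (c * σ i₀) :=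
    le_update_iff.2 ⟨(minPos_nonneg σ).trans hlow, fun i _ => svals_nonneg S i⟩
  rw [kappa_mul_diagRect_mul hU hV (smul_nonneg hscale.le hnonneg), condNum_smul hscale,
    condNum_update_eq (d := σ) (Fin.ne_of_val_ne one_ne_zero)
      (fun i hi => svals_antitone S (Nat.one_le_iff_ne_zero.2 fun h => hi (Fin.ext h)))
      (svals_antitone S (Nat.zero_le 1)) hσ₀ hlow hup]
  refine ⟨?_, rfl⟩
  rw [hκS, hσ]
  field_simp
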